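/- Exponential bound on the rotation speed: for every E ∈ ℝ with −1 ≤ E ≤ W + 1, the derivative of the final Prüfer angle satisfies φ'_{N+1}(E) ≤ (η(W)^{−N} − 1)/(η(W)^{−1} − 1). -/

import Mathlib

/-!
Differentiating the recursion `φ_{n+1} = arctan (E - ε_n - cot φ_n) + kπ` gives
`φ'_{n+1} = (sin² φ_n + φ'_n) / q(E - ε_n, φ_n)`, also at the zeros of `sin φ_n`, where the step
is locally `kπ - π/2 - arctan (sin φ / ((E - ε_n) sin φ - cos φ))`. Since `q ≥ sin²` and `q ≥ η`
whenever `|E - ε_n| ≤ W + 1`, this yields `φ'_{n+1} ≤ 1 + η⁻¹ φ'_n`, and `φ'_1 = 0`, so `φ'_{N+1}`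
is bounded by the geometric sum `∑_{j<N} η⁻ʲ`.
-/

/-- The quadratic form `q(x, φ) = 1 − 2x sin φ cos φ + x² sin² φ`. -/
noncomputable def qform (x φ : ℝ) : ℝ :=
  1 - 2 * x * Real.sin φ * Real.cos φ + x ^ 2 * Real.sin φ ^ 2

/-- `η(W) = min { q(x, φ) : |x| ≤ W + 1, 0 ≤ φ ≤ π }`. -/
noncomputable def eta (W : ℝ) : ℝ :=
  sInf ((fun p : ℝ × ℝ => qform p.1 p.2) '' (Set.Icc (-(W + 1)) (W + 1) ×ˢ Set.Icc 0 Real.pi))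

/-- One step of the Prüfer angle recursion: if `φ = kπ` (i.e. `sin φ = 0`) the next
angle is `(k − 1/2)π = φ − π/2`; otherwise, with `k = ⌊φ/π⌋` the unique integer with
`kπ < φ < (k+1)π`, the next angle is `arctan(E − e − cot φ) + kπ`. -/
noncomputable def pruferStep (e E φ : ℝ) : ℝ :=
  if Real.sin φ = 0 then φ - Real.pi / 2
  else Real.arctan (E - e - Real.cos φ / Real.sin φ) + Real.pi * ((⌊φ / Real.pi⌋ : ℤ) : ℝ)

/-- The Prüfer angles: `φ_1(E) = π/2` and `φ_{n+1}(E) = pruferStep (ε n) E (φ_n(E))`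
for `n ≥ 1`.  (The value at index `0` is junk, set to `π/2`.) -/
noncomputable def prufer (ε : ℕ → ℝ) (E : ℝ) : ℕ → ℝ
  | 0 => Real.pi / 2
  | 1 => Real.pi / 2
  | n + 2 => pruferStep (ε (n + 1)) E (prufer ε E (n + 1))

open Real Set Topology

theorem qform_eq_sq_add_sq (x φ : ℝ) : qform x φ = (cos φ - x * sin φ) ^ 2 + sin φ ^ 2 := by
  rw [qform]
  linear_combination -sin_sq_add_cos_sq φ

theorem sin_sq_le_qform (x φ : ℝ) : sin φ ^ 2 ≤ qform x φ := by
  rw [qform_eq_sq_add_sq]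
  exact le_add_of_nonneg_left (sq_nonneg _)

theorem qform_of_sin_eq_zero (x : ℝ) {φ : ℝ} (h : sin φ = 0) : qform x φ = 1 := by
  simp [qform, h]

theorem qform_pos (x φ : ℝ) : 0 < qform x φ := by
  rcases eq_or_ne (sin φ) 0 with h | h
  · rw [qform_of_sin_eq_zero x h]
    exact one_pos
  · exact (by positivity : (0 : ℝ) < sin φ ^ 2).trans_le (sin_sq_le_qform x φ)

theorem qform_eq_sin_sq_mul (x : ℝ) {φ : ℝ} (h : sin φ ≠ 0) :
    qform x φ = sin φ ^ 2 * (1 + (x - cos φ / sin φ) ^ 2) := by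
  rw [qform]
  field_simp
  linear_combination -sin_sq_add_cos_sq φ

theorem qform_periodic (x : ℝ) : Function.Periodic (qform x) π := fun φ => by
  simp only [qform, sin_add_pi, cos_add_pi]
  ring

theorem sin_sq_periodic : Function.Periodic (fun φ => sin φ ^ 2) π := fun φ => by
  simp only [sin_add_pi, neg_sq]

theorem eta_le_qform {W x : ℝ} (hx : x ∈ Icc (-(W + 1)) (W + 1)) (φ : ℝ) : eta W ≤ qform x φ := by
  obtain ⟨θ, hθ, hφθ⟩ := (qform_periodic x).exists_mem_Ico₀ pi_pos φ
  rw [hφθ]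
  refine csInf_le ⟨0, ?_⟩ ⟨(x, θ), mk_mem_prod hx (Ico_subset_Icc_self hθ), rfl⟩
  rintro _ ⟨p, -, rfl⟩
  exact (qform_pos _ _).le

theorem eta_pos {W : ℝ} (hW : -1 ≤ W) : 0 < eta W := by
  have hne : (Icc (-(W + 1)) (W + 1) ×ˢ Icc 0 π).Nonempty :=
    ⟨(0, 0), mk_mem_prod ⟨by linarith, by linarith⟩ ⟨le_rfl, pi_pos.le⟩⟩
  obtain ⟨p, -, hp⟩ := (isCompact_Icc.prod isCompact_Icc).exists_sInf_image_eq hne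
    (show Continuous fun p : ℝ × ℝ => qform p.1 p.2 by unfold qform; fun_prop).continuousOn
  rw [eta, hp]
  exact qform_pos _ _

theorem eta_lt_one {W : ℝ} (hW : 0 ≤ W) : eta W < 1 := by
  have hq : qform 1 (π / 4) = 1 / 2 := by
    rw [qform_eq_sq_add_sq, sin_pi_div_four, cos_pi_div_four, div_pow, sq_sqrt zero_le_two]
    ring
  calc eta W ≤ qform 1 (π / 4) := eta_le_qform ⟨by linarith, by linarith⟩ _
    _ < 1 := by rw [hq]; norm_num

theorem pruferStep_add_int_mul_pi (e E φ : ℝ) (k : ℤ) :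
    pruferStep e E (φ + k * π) = pruferStep e E φ + k * π := by
  have hsign : ((-1 : ℝ) ^ k) ≠ 0 := zpow_ne_zero k (by norm_num)
  simp only [pruferStep, sin_add_int_mul_pi, cos_add_int_mul_pi, mul_eq_zero, hsign, false_or]
  split_ifs with h
  · ring
  · rw [mul_div_mul_left _ _ hsign, add_div, mul_div_cancel_right₀ _ pi_ne_zero,
      Int.floor_add_intCast]
    push_cast
    ring

theorem pruferStep_of_mem_Ioo (e E : ℝ) {φ : ℝ} (h : φ ∈ Ioo 0 π) :
    pruferStep e E φ = arctan (E - e - cos φ / sin φ) := by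
  have hfloor : ⌊φ / π⌋ = 0 := by
    rw [Int.floor_eq_zero_iff]
    exact ⟨div_nonneg h.1.le pi_pos.le, (div_lt_one pi_pos).2 h.2⟩
  rw [pruferStep, if_neg (sin_pos_of_pos_of_lt_pi h.1 h.2).ne', hfloor]
  simp

/-- Near a zero of `sin`, the branch cut of `arctan (E - e - cot φ)` is removed by passing to
the reciprocal argument. -/
theorem pruferStep_of_mem_Ioo_neg_pi_pi (e E : ℝ) {θ : ℝ} (hθ : θ ∈ Ioo (-π) π)
    (hD : (E - e) * sin θ - cos θ < 0) :
    pruferStep e E θ = -(π / 2) - arctan (sin θ / ((E - e) * sin θ - cos θ)) := by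
  rcases lt_trichotomy θ 0 with hneg | rfl | hpos
  · have hs : sin θ < 0 := sin_neg_of_neg_of_neg_pi_lt hneg hθ.1
    have hshift := pruferStep_add_int_mul_pi e E θ 1
    rw [Int.cast_one, one_mul, pruferStep_of_mem_Ioo e E ⟨by linarith [hθ.1], by linarith⟩,
      sin_add_pi, cos_add_pi, neg_div_neg_eq, sub_div' hs.ne] at hshift
    have hinv := arctan_inv_of_pos (div_pos_of_neg_of_neg hD hs)
    rw [inv_div] at hinv
    linarith
  · simp [pruferStep]
  · have hs : 0 < sin θ := sin_pos_of_pos_of_lt_pi hpos hθ.2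
    have hinv := arctan_inv_of_neg (div_neg_of_neg_of_pos hD hs)
    rw [inv_div] at hinv
    rw [pruferStep_of_mem_Ioo e E ⟨hpos, hθ.2⟩, sub_div' hs.ne']
    linarith

section Derivative

variable (e : ℝ) {θ : ℝ → ℝ} {d E : ℝ}

theorem hasDerivAt_pruferStep_comp_of_mem_Ioo (hθ : HasDerivAt θ d E) (hmem : θ E ∈ Ioo 0 π) :
    HasDerivAt (fun E' => pruferStep e E' (θ E'))
      ((sin (θ E) ^ 2 + d) / qform (E - e) (θ E)) E := by
  have hs : sin (θ E) ≠ 0 := (sin_pos_of_pos_of_lt_pi hmem.1 hmem.2).ne'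
  have hev : (fun E' => pruferStep e E' (θ E')) =ᶠ[𝓝 E]
      fun E' => arctan (E' - e - cos (θ E') / sin (θ E')) :=
    (hθ.continuousAt.eventually_mem (isOpen_Ioo.mem_nhds hmem)).mono
      fun E' h => pruferStep_of_mem_Ioo e E' h
  have hcot : HasDerivAt (fun E' => E' - e - cos (θ E') / sin (θ E'))
      (1 + d / sin (θ E) ^ 2) E := by
    refine (((hasDerivAt_id' E).sub_const e).sub (hθ.cos.div hθ.sin hs)).congr_deriv ?_
    field_simp
    linear_combination d * sin_sq_add_cos_sq (θ E)
  refine (hcot.arctan.congr_of_eventuallyEq hev).congr_deriv ?_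
  rw [qform_eq_sin_sq_mul _ hs]
  field_simp

theorem hasDerivAt_pruferStep_comp_of_eq_zero (hθ : HasDerivAt θ d E) (h0 : θ E = 0) :
    HasDerivAt (fun E' => pruferStep e E' (θ E')) d E := by
  set D : ℝ → ℝ := fun E' => (E' - e) * sin (θ E') - cos (θ E')
  have hD : HasDerivAt D _ E := (((hasDerivAt_id' E).sub_const e).mul hθ.sin).sub hθ.cos
  have hDE : D E = -1 := by simp [D, h0]
  have hmem : ∀ᶠ E' in 𝓝 E, θ E' ∈ Ioo (-π) π :=
    hθ.continuousAt.eventually_mem <| isOpen_Ioo.mem_nhds <| by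
      rw [h0]
      exact ⟨neg_neg_of_pos pi_pos, pi_pos⟩
  have hneg : ∀ᶠ E' in 𝓝 E, D E' < 0 :=
    hD.continuousAt.eventually_lt continuousAt_const (by rw [hDE]; norm_num)
  have hev : (fun E' => pruferStep e E' (θ E')) =ᶠ[𝓝 E]
      fun E' => -(π / 2) - arctan (sin (θ E') / D E') := by
    filter_upwards [hmem, hneg] with E' h1 h2
    exact pruferStep_of_mem_Ioo_neg_pi_pi e E' h1 h2
  refine ((hθ.sin.div hD (by rw [hDE]; norm_num)).arctan.const_sub _).congr_of_eventuallyEq hev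
    |>.congr_deriv ?_
  simp [hDE, h0]

theorem hasDerivAt_pruferStep_comp {ψ : ℝ → ℝ} (hψ : HasDerivAt ψ d E) :
    HasDerivAt (fun E' => pruferStep e E' (ψ E'))
      ((sin (ψ E) ^ 2 + d) / qform (E - e) (ψ E)) E := by
  set k := ⌊ψ E / π⌋
  have hθ : HasDerivAt (fun E' => ψ E' - k * π) d E := hψ.sub_const _
  have hshift : (fun E' => pruferStep e E' (ψ E')) =
      fun E' => pruferStep e E' (ψ E' - k * π) + k * π := by
    funext E'
    rw [← pruferStep_add_int_mul_pi, sub_add_cancel]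
  have hperiod : (sin (ψ E) ^ 2 + d) / qform (E - e) (ψ E) =
      (sin (ψ E - k * π) ^ 2 + d) / qform (E - e) (ψ E - k * π) := by
    rw [sin_sq_periodic.sub_int_mul_eq, (qform_periodic _).sub_int_mul_eq]
  rw [hshift, hperiod]
  refine HasDerivAt.add_const _ ?_
  rcases (Int.sub_floor_div_mul_nonneg (ψ E) pi_pos).eq_or_lt with h0 | hpos
  · rw [← h0, sin_zero, qform_of_sin_eq_zero _ sin_zero]
    simpa using hasDerivAt_pruferStep_comp_of_eq_zero e hθ h0.symm
  · exact hasDerivAt_pruferStep_comp_of_mem_Ioo e hθ ⟨hpos, Int.sub_floor_div_mul_lt _ pi_pos⟩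

end Derivative

theorem exists_hasDerivAt_prufer_le_geom_sum {ε : ℕ → ℝ} {E η : ℝ} (hη : 0 < η) :
    ∀ N : ℕ, (∀ n, 1 ≤ n → n ≤ N → ∀ φ, η ≤ qform (E - ε n) φ) →
      ∃ d, HasDerivAt (fun E' => prufer ε E' (N + 1)) d E ∧ 0 ≤ d ∧
        d ≤ ∑ j ∈ Finset.range N, η⁻¹ ^ j
  | 0, _ => ⟨0, hasDerivAt_const _ _, le_rfl, by simp⟩
  | N + 1, hq => by
    obtain ⟨d, hd, hd0, hdle⟩ :=
      exists_hasDerivAt_prufer_le_geom_sum hη N fun n h1 h2 => hq n h1 (by omega)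
    set φ := prufer ε E (N + 1)
    have hqpos := qform_pos (E - ε (N + 1)) φ
    refine ⟨_, hasDerivAt_pruferStep_comp (ε (N + 1)) hd, by positivity, ?_⟩
    calc (sin φ ^ 2 + d) / qform (E - ε (N + 1)) φ
        = sin φ ^ 2 / qform (E - ε (N + 1)) φ + d / qform (E - ε (N + 1)) φ := add_div _ _ _
      _ ≤ 1 + d / η := add_le_add ((div_le_one hqpos).2 (sin_sq_le_qform _ _))
          (div_le_div_of_nonneg_left hd0 hη (hq (N + 1) (by omega) le_rfl φ))
      _ ≤ 1 + η⁻¹ * ∑ j ∈ Finset.range N, η⁻¹ ^ j := by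
          rw [div_eq_inv_mul]; gcongr
      _ = ∑ j ∈ Finset.range (N + 1), η⁻¹ ^ j := by rw [geom_sum_succ]; ring

theorem prufer_deriv_exponential_bound_general
    (N : ℕ) (W : ℝ) (hW : 0 ≤ W)
    (ε : ℕ → ℝ) (hε : ∀ n, 1 ≤ n → n ≤ N → ε n ∈ Set.Icc 0 W) :
    ∀ E ∈ Set.Icc (-1 : ℝ) (W + 1),
      deriv (fun E' : ℝ => prufer ε E' (N + 1)) E
        ≤ ((eta W)⁻¹ ^ N - 1) / ((eta W)⁻¹ - 1) := by
  intro E hE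
  have hη : 0 < eta W := eta_pos (by linarith)
  obtain ⟨d, hd, -, hdle⟩ := exists_hasDerivAt_prufer_le_geom_sum (ε := ε) (E := E) hη N
    fun n h1 h2 => eta_le_qform ⟨by linarith [hE.1, (hε n h1 h2).2],
      by linarith [hE.2, (hε n h1 h2).1]⟩
  rw [hd.deriv, ← geom_sum_eq ((one_lt_inv₀ hη).2 (eta_lt_one hW)).ne']
  exact hdle

/-- **Exponential bound on the rotation speed**: for every `E ∈ [−1, W + 1]`,
`φ'_{N+1}(E) ≤ (η(W)⁻ᴺ − 1)/(η(W)⁻¹ − 1)`. -/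
theorem prufer_deriv_exponential_bound
    (N : ℕ) (hN : 1 ≤ N) (W : ℝ) (hW : 0 ≤ W)
    (ε : ℕ → ℝ) (hε : ∀ n, 1 ≤ n → n ≤ N → ε n ∈ Set.Icc 0 W) :
    ∀ E ∈ Set.Icc (-1 : ℝ) (W + 1),
      deriv (fun E' : ℝ => prufer ε E' (N + 1)) E
        ≤ ((eta W)⁻¹ ^ N - 1) / ((eta W)⁻¹ - 1) :=
  prufer_deriv_exponential_bound_general N W hW ε hε
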